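/- Let p ≥ 2, λ a p-regular partition, i a residue mod p, and r ≤ φ_i(λ). Then ẽ_i^r (f̃_i^r λ) = λ. Similarly, if r ≤ ε_i(λ) then f̃_i^r (ẽ_i^r λ) = λ. -/

import Mathlib

/-- The entry of the `i₀`-signature of the partition `lam` coming from row
`r` (rows indexed from `0`): `some (true, r)` if there is an addable node of
residue `i₀` at the end of row `r`, `some (false, r)` if there is a removable
node of residue `i₀` there, and `none` otherwise.  The node `(r, c)` (with
row and column both `0`-indexed here, so the node in row `r`, column `c`,
counting from `0`) has residue `c - r` computed in `ZMod p` from the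
`1`-indexed coordinates `λ_r` and `r + 1`. -/
def rowEntry (p : ℕ) (i₀ : ZMod p) (lam : ℕ → ℕ) (r : ℕ) : Option (Bool × ℕ) :=
  if (r = 0 ∨ lam r < lam (r - 1)) ∧ ((lam r : ZMod p) + 1 - (r + 1) = i₀) then
    some (true, r)
  else if (lam (r + 1) < lam r) ∧ ((lam r : ZMod p) - (r + 1) = i₀) then
    some (false, r)
  else none

/-- The `i₀`-signature of `lam`, read along the rim from bottom left to top
right, i.e. through the rows `N, N-1, …, 1, 0` (where `lam` vanishes from row
`N` on); `true` stands for `+` (addable), `false` for `-` (removable), and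
each sign is recorded together with its row. -/
def signature (p : ℕ) (i₀ : ZMod p) (lam : ℕ → ℕ) (N : ℕ) : List (Bool × ℕ) :=
  ((List.range (N + 1)).reverse).filterMap (rowEntry p i₀ lam)

/-- One step of the reduction of a signature, processing the signs in reading
order with a stack: a `+` (`true`) cancels against a `-` (`false`) lying
immediately before it. -/
def reduceStep (st : List (Bool × ℕ)) (x : Bool × ℕ) : List (Bool × ℕ) :=
  match x.1, st with
  | true, (false, _) :: rest => rest
  | _, _ => x :: st

/-- The reduced signature, obtained by successively cancelling all
neighbouring pairs `-+`. -/
def reducedSig (s : List (Bool × ℕ)) : List (Bool × ℕ) :=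
  (s.foldl reduceStep []).reverse

/-- The rows of the normal nodes (surviving `-`'s), from bottom to top. -/
def normalRows (p : ℕ) (i₀ : ZMod p) (lam : ℕ → ℕ) (N : ℕ) : List ℕ :=
  ((reducedSig (signature p i₀ lam N)).filter (fun x => x.1 = false)).map
    Prod.snd

/-- The rows of the conormal nodes (surviving `+`'s), from bottom to top. -/
def conormalRows (p : ℕ) (i₀ : ZMod p) (lam : ℕ → ℕ) (N : ℕ) : List ℕ :=
  ((reducedSig (signature p i₀ lam N)).filter (fun x => x.1 = true)).map
    Prod.snd

/-- `ε_{i₀}(λ)`, the number of `i₀`-normal nodes. -/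
def epsNormal (p : ℕ) (i₀ : ZMod p) (lam : ℕ → ℕ) (N : ℕ) : ℕ :=
  (normalRows p i₀ lam N).length

/-- `φ_{i₀}(λ)`, the number of `i₀`-conormal nodes. -/
def phiConormal (p : ℕ) (i₀ : ZMod p) (lam : ℕ → ℕ) (N : ℕ) : ℕ :=
  (conormalRows p i₀ lam N).length

/-- `ẽ_{i₀}^r λ`: remove the bottom `r` `i₀`-normal nodes of `λ`. -/
def etilde (p : ℕ) (i₀ : ZMod p) (lam : ℕ → ℕ) (N r : ℕ) : ℕ → ℕ :=
  fun k => if k ∈ (normalRows p i₀ lam N).take r then lam k - 1 else lam k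

/-- `f̃_{i₀}^r λ`: add the top `r` `i₀`-conormal nodes of `λ`. -/
def ftilde (p : ℕ) (i₀ : ZMod p) (lam : ℕ → ℕ) (N r : ℕ) : ℕ → ℕ :=
  fun k =>
    if k ∈ ((conormalRows p i₀ lam N).reverse).take r then lam k + 1 else lam k

/-- A partition is `p`-regular if no (positive) part is repeated `p` or more
times. -/
def PRegular (p : ℕ) (lam : ℕ → ℕ) : Prop :=
  ∀ k : ℕ, 0 < lam (k + (p - 1)) → lam (k + (p - 1)) < lam k


section Helpers

-- basic step lemmas
lemma rs_false (st : List (Bool × ℕ)) (k : ℕ) :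
    reduceStep st (false, k) = (false, k) :: st := by
  cases st with
  | nil => rfl
  | cons a t => rcases a with ⟨b, j⟩; cases b <;> rfl

lemma rs_pop (st : List (Bool × ℕ)) (j k : ℕ) :
    reduceStep ((false, j) :: st) (true, k) = st := rfl

lemma rs_true_nil (k : ℕ) : reduceStep [] (true, k) = [(true, k)] := rfl

lemma rs_true_true (st : List (Bool × ℕ)) (j k : ℕ) :
    reduceStep ((true, j) :: st) (true, k) = (true, k) :: (true, j) :: st := rfl

lemma rs_cases (st : List (Bool × ℕ)) (x : Bool × ℕ) :
    reduceStep st x = x :: st ∨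
      (x.1 = true ∧ ∃ j, st = (false, j) :: reduceStep st x) := by
  rcases x with ⟨b, k⟩
  cases b with
  | false => exact Or.inl (rs_false st k)
  | true =>
    cases st with
    | nil => exact Or.inl rfl
    | cons a t =>
      rcases a with ⟨b', j⟩
      cases b' with
      | false => exact Or.inr ⟨rfl, j, rfl⟩
      | true => exact Or.inl rfl


lemma suffix_persist (v : List (Bool × ℕ)) :
    ∀ (st B : List (Bool × ℕ)) (j : ℕ), ((true, j) :: B) <:+ st →
      ((true, j) :: B) <:+ List.foldl reduceStep st v := by
  induction v with
  | nil => exact fun st B j h => h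
  | cons x v ih =>
    intro st B j h
    rw [List.foldl_cons]
    apply ih
    rcases rs_cases st x with h1 | ⟨-, j', h2⟩
    · rw [h1]; exact h.trans (List.suffix_cons x st)
    · rw [h2] at h
      rcases List.suffix_cons_iff.mp h with h3 | h3
      · exact absurd (congrArg List.head? h3) (by simp)
      · exact h3

lemma stack_rev_sublist (v : List (Bool × ℕ)) :
    ∀ st : List (Bool × ℕ),
      List.Sublist (List.foldl reduceStep st v).reverse (st.reverse ++ v) := by
  induction v with
  | nil => simp
  | cons x v ih =>
    intro st
    rw [List.foldl_cons]
    refine (ih _).trans ?_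
    rcases rs_cases st x with h1 | ⟨-, j', h2⟩
    · rw [h1]; simp
    · conv_rhs => rw [h2]
      simp only [List.reverse_cons, List.append_assoc]
      exact List.Sublist.append_left
        ((List.sublist_cons_self x v).trans (List.sublist_cons_self _ _)) _

lemma mem_stack (v : List (Bool × ℕ)) (st : List (Bool × ℕ)) (x : Bool × ℕ)
    (hx : x ∈ List.foldl reduceStep st v) : x ∈ st ∨ x ∈ v := by
  have h2 : x ∈ st.reverse ++ v := (stack_rev_sublist v st).mem (by simpa using hx)
  simpa using h2


lemma rs_push_alltrue (st : List (Bool × ℕ)) (hst : ∀ x ∈ st, x.1 = true) (k : ℕ) :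
    reduceStep st (true, k) = (true, k) :: st := by
  cases st with
  | nil => rfl
  | cons a t =>
    rcases a with ⟨b, j⟩
    have : b = true := hst _ (List.mem_cons_self)
    subst this
    exact rs_true_true t j k

lemma decomp (w : List (Bool × ℕ)) :
    ∀ (st D P : List (Bool × ℕ)) (b : Bool) (k : ℕ),
      List.foldl reduceStep st w = D ++ (b, k) :: P →
      (∃ E, st = E ++ (b, k) :: P) ∨
        ∃ u v, w = u ++ (b, k) :: v ∧ List.foldl reduceStep st u = P ∧
          List.foldl reduceStep ((b, k) :: P) v = List.foldl reduceStep st w := by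
  induction w with
  | nil => intro st D P b k h; exact Or.inl ⟨D, h⟩
  | cons x w ih =>
    intro st D P b k h
    rw [List.foldl_cons] at h
    rcases ih (reduceStep st x) D P b k h with h1 | ⟨u, v, h2, h3, h4⟩
    · rcases h1 with ⟨E, hE⟩
      rcases rs_cases st x with hc | ⟨-, j, hc⟩
      · -- push : reduceStep st x = x :: st
        cases E with
        | nil =>
          -- x = (b,k), st = P
          rw [hc] at hE
          simp only [List.nil_append] at hE
          have hx : x = (b, k) := (List.cons.injEq _ _ _ _).mp hE |>.1
          have hst : st = P := (List.cons.injEq _ _ _ _).mp hE |>.2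
          refine Or.inr ⟨[], w, by simp [hx], by simpa using hst, ?_⟩
          rw [List.foldl_cons, ← hx, ← hst, ← hc]
        | cons e E' =>
          rw [hc] at hE
          simp only [List.cons_append, List.cons.injEq] at hE
          exact Or.inl ⟨E', hE.2⟩
      · -- pop
        rw [hE] at hc
        exact Or.inl ⟨(false, j) :: E, by rw [hc]; rfl⟩
    · exact Or.inr ⟨x :: u, v, by rw [h2]; rfl, by rw [List.foldl_cons]; exact h3,
        by rw [h4, List.foldl_cons]⟩

lemma sim1 (v : List (Bool × ℕ)) :
    ∀ (E P D : List (Bool × ℕ)) (k : ℕ),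
      (∀ x ∈ E, x.1 = false) → (∀ x ∈ D, x.1 = false) →
      List.foldl reduceStep (E ++ (true, k) :: P) v = D ++ (true, k) :: P →
      List.foldl reduceStep (E ++ (false, k) :: P) v = D ++ (false, k) :: P := by
  induction v with
  | nil =>
    intro E P D k _ _ h
    simp only [List.foldl_nil] at h ⊢
    have : E = D := List.append_cancel_right h
    rw [this]
  | cons x v ih =>
    intro E P D k hE hD h
    rw [List.foldl_cons] at h ⊢
    rcases x with ⟨xb, xk⟩
    cases xb with
    | false =>
      rw [rs_false] at h ⊢
      have := ih ((false, xk) :: E) P D k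
        (List.forall_mem_cons.mpr ⟨rfl, hE⟩) hD (by simpa using h)
      simpa using this
    | true =>
      cases E with
      | nil =>
        -- contradiction with h
        exfalso
        simp only [List.nil_append] at h
        rw [rs_true_true] at h
        have hsuf : ((true, xk) :: (true, k) :: P) <:+ D ++ (true, k) :: P := by
          rw [← h]
          exact suffix_persist v _ _ _ (List.suffix_refl _)
        rcases hsuf with ⟨C, hC⟩
        have : (C ++ [(true, xk)]) ++ (true, k) :: P = D ++ (true, k) :: P := by
          rw [← hC]; simp
        have hCD : C ++ [(true, xk)] = D := List.append_cancel_right this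
        have : (true, xk) ∈ D := by rw [← hCD]; simp
        simpa using hD _ this
      | cons e E' =>
        rcases e with ⟨eb, ej⟩
        have heb : eb = false := hE _ (List.mem_cons_self)
        subst heb
        simp only [List.cons_append] at h ⊢
        rw [rs_pop] at h ⊢
        exact ih E' P D k (fun y hy => hE y (List.mem_cons_of_mem _ hy)) hD h

lemma sim2 (v : List (Bool × ℕ)) :
    ∀ (E P D : List (Bool × ℕ)) (k : ℕ),
      (∀ x ∈ E, x.1 = false) → (∀ x ∈ D, x.1 = false) → (∀ x ∈ P, x.1 = true) →
      (false, k) ∉ v →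
      List.foldl reduceStep (E ++ (false, k) :: P) v = D ++ (false, k) :: P →
      List.foldl reduceStep (E ++ (true, k) :: P) v = D ++ (true, k) :: P := by
  induction v with
  | nil =>
    intro E P D k _ _ _ _ h
    simp only [List.foldl_nil] at h ⊢
    rw [List.append_cancel_right h]
  | cons x v ih =>
    intro E P D k hE hD hP hk h
    rw [List.foldl_cons] at h ⊢
    rcases x with ⟨xb, xk⟩
    cases xb with
    | false =>
      rw [rs_false] at h ⊢
      have := ih ((false, xk) :: E) P D k
        (List.forall_mem_cons.mpr ⟨rfl, hE⟩) hD hP (fun hc => hk (List.mem_cons_of_mem _ hc)) (by simpa using h)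
      simpa using this
    | true =>
      cases E with
      | nil =>
        exfalso
        simp only [List.nil_append] at h
        rw [rs_pop] at h
        have : (false, k) ∈ List.foldl reduceStep P v := by
          rw [h]; simp
        rcases mem_stack v P _ this with hc | hc
        · simpa using hP _ hc
        · exact hk (List.mem_cons_of_mem _ hc)
      | cons e E' =>
        rcases e with ⟨eb, ej⟩
        have heb : eb = false := hE _ (List.mem_cons_self)
        subst heb
        simp only [List.cons_append] at h ⊢
        rw [rs_pop] at h ⊢
        exact ih E' P D k (fun y hy => hE y (List.mem_cons_of_mem _ hy)) hD hP
          (fun hc => hk (List.mem_cons_of_mem _ hc)) h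

lemma stack_form (v : List (Bool × ℕ)) :
    ∀ (M P : List (Bool × ℕ)), (∀ x ∈ M, x.1 = false) → (∀ x ∈ P, x.1 = true) →
      ∃ M' P', List.foldl reduceStep (M ++ P) v = M' ++ P' ∧
        (∀ x ∈ M', x.1 = false) ∧ (∀ x ∈ P', x.1 = true) := by
  induction v with
  | nil => intro M P hM hP; exact ⟨M, P, by simp, hM, hP⟩
  | cons x v ih =>
    intro M P hM hP
    rw [List.foldl_cons]
    rcases x with ⟨xb, xk⟩
    cases xb with
    | false =>
      rw [rs_false]
      exact ih ((false, xk) :: M) P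
        (List.forall_mem_cons.mpr ⟨rfl, hM⟩) hP
    | true =>
      cases M with
      | nil =>
        simp only [List.nil_append]
        rw [rs_push_alltrue P hP]
        have := ih [] ((true, xk) :: P) (by simp)
          (List.forall_mem_cons.mpr ⟨rfl, hP⟩)
        simpa using this
      | cons e M' =>
        rcases e with ⟨eb, ej⟩
        have heb : eb = false := hM _ (List.mem_cons_self)
        subst heb
        simp only [List.cons_append]
        rw [rs_pop]
        exact ih M' P (fun y hy => hM y (List.mem_cons_of_mem _ hy)) hP


def flipf (R : List ℕ) (x : Bool × ℕ) : Bool × ℕ :=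
  if x.2 ∈ R then (!x.1, x.2) else x

lemma flipf_snd (R : List ℕ) (x : Bool × ℕ) : (flipf R x).2 = x.2 := by
  unfold flipf; split <;> rfl

lemma flipf_of_ne (R : List ℕ) (k : ℕ) (x : Bool × ℕ) (hx : x.2 ≠ k) :
    flipf (k :: R) x = flipf R x := by
  unfold flipf
  simp [List.mem_cons, hx]

lemma flipf_of_ne' (R : List ℕ) (k : ℕ) (x : Bool × ℕ) (hx : x.2 ≠ k) :
    flipf (R ++ [k]) x = flipf R x := by
  unfold flipf
  simp [List.mem_append, hx]

-- rows of the stack are (reversed) a sublist of the rows of w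
lemma stack_rows_nodup (w st : List (Bool × ℕ)) (hnd : (w.map Prod.snd).Nodup)
    (hst : List.foldl reduceStep [] w = st) : (st.map Prod.snd).Nodup := by
  have h1 : List.Sublist st.reverse w := by
    have := stack_rev_sublist w []
    rwa [hst, List.reverse_nil, List.nil_append] at this
  have h2 : List.Sublist (st.reverse.map Prod.snd) (w.map Prod.snd) := h1.map _
  have h3 : (st.reverse.map Prod.snd).Nodup := hnd.sublist h2
  rw [List.map_reverse] at h3
  exact List.nodup_reverse.mp h3

lemma iter1 : ∀ (r : ℕ) (w M P : List (Bool × ℕ)),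
    (w.map Prod.snd).Nodup →
    (∀ x ∈ M, x.1 = false) → (∀ x ∈ P, x.1 = true) →
    List.foldl reduceStep [] w = M ++ P → r ≤ P.length →
    List.foldl reduceStep [] (w.map (flipf ((P.take r).map Prod.snd)))
      = M ++ (P.take r).map (fun x => (false, x.2)) ++ P.drop r := by
  intro r
  induction r with
  | zero =>
    intro w M P _ _ _ h _
    have hid : flipf [] = id := by
      funext x; simp [flipf]
    simpa [hid] using h
  | succ r ih =>
    intro w M P hnd hM hP h hr
    cases P with
    | nil => simp at hr
    | cons p₀ P' =>
      obtain ⟨pb, k⟩ := p₀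
      have hpb : pb = true := hP _ (List.mem_cons_self)
      subst hpb
      have hP' : ∀ x ∈ P', x.1 = true := fun x hx => hP x (List.mem_cons_of_mem _ hx)
      have hstnd := stack_rows_nodup w _ hnd h
      have hkP' : k ∉ P'.map Prod.snd := by
        simp only [List.map_append, List.map_cons] at hstnd
        have h1 : (k :: P'.map Prod.snd).Nodup :=
          hstnd.sublist (List.sublist_append_right _ _)
        exact (List.nodup_cons.mp h1).1
      rcases decomp w [] M P' true k h with ⟨E, hE⟩ | ⟨u, v, hw, hu, hv⟩
      · exact absurd hE (by simp)
      · rw [h] at hv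
        have hsim := sim1 v [] P' M k (by simp) hM (by simpa using hv)
        -- rows of w
        have hwrows : w.map Prod.snd = u.map Prod.snd ++ k :: v.map Prod.snd := by
          simp [hw]
        have hnd' : (u.map Prod.snd ++ k :: v.map Prod.snd).Nodup := by
          rw [← hwrows]; exact hnd
        have hku : k ∉ u.map Prod.snd := by
          have := (List.nodup_append'.mp hnd').2.2
          intro hc
          exact this hc (List.mem_cons_self)
        have hkv : k ∉ v.map Prod.snd := by
          have := (List.nodup_append'.mp hnd').2.1
          exact (List.nodup_cons.mp this).1
        set w₁ : List (Bool × ℕ) := u ++ (false, k) :: v with hw₁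
        have h₁ : List.foldl reduceStep [] w₁ = (M ++ [(false, k)]) ++ P' := by
          rw [hw₁, List.foldl_append, hu, List.foldl_cons, rs_false]
          simpa using hsim
        have hnd₁ : (w₁.map Prod.snd).Nodup := by
          have : w₁.map Prod.snd = u.map Prod.snd ++ k :: v.map Prod.snd := by
            simp [hw₁]
          rw [this]; exact hnd'
        have hM₁ : ∀ x ∈ M ++ [(false, k)], x.1 = false := by
          intro x hx
          rcases List.mem_append.mp hx with h' | h'
          · exact hM x h'
          · simp at h'; rw [h']
        have hr₁ : r ≤ P'.length := by
          simpa [Nat.succ_le_succ_iff] using hr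
        have hIH := ih w₁ (M ++ [(false, k)]) P' hnd₁ hM₁ hP' h₁ hr₁
        -- identify the two flipped words
        have hRsub : ∀ j ∈ (P'.take r).map Prod.snd, j ∈ P'.map Prod.snd := by
          intro j hj
          exact List.map_subset _ (List.take_subset _ _) hj
        have hmapeq : w.map (flipf (((((true, k) : Bool × ℕ) :: P').take (r+1)).map Prod.snd))
            = w₁.map (flipf ((P'.take r).map Prod.snd)) := by
          have hR : ((((true, k) : Bool × ℕ) :: P').take (r+1)).map Prod.snd
              = k :: (P'.take r).map Prod.snd := by
            simp
          rw [hR, hw, hw₁]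
          simp only [List.map_append, List.map_cons]
          congr 1
          · apply List.map_congr_left
            intro x hx
            exact flipf_of_ne _ k x (fun hc => hku (hc ▸ List.mem_map_of_mem (f := Prod.snd) hx))
          · congr 1
            · show flipf _ (true, k) = flipf _ (false, k)
              have h2 : k ∉ (P'.take r).map Prod.snd := fun hc => hkP' (hRsub k hc)
              rw [List.map_take] at h2
              simp [flipf, h2]
            · apply List.map_congr_left
              intro x hx
              exact flipf_of_ne _ k x (fun hc => hkv (hc ▸ List.mem_map_of_mem (f := Prod.snd) hx))
        rw [hmapeq, hIH]
        simp

lemma iter2 : ∀ (Q : List (Bool × ℕ)) (w M P : List (Bool × ℕ)),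
    (w.map Prod.snd).Nodup →
    (∀ x ∈ M, x.1 = false) → (∀ x ∈ Q, x.1 = false) → (∀ x ∈ P, x.1 = true) →
    List.foldl reduceStep [] w = M ++ Q ++ P →
    List.foldl reduceStep [] (w.map (flipf (Q.map Prod.snd)))
      = M ++ Q.map (fun x => (true, x.2)) ++ P := by
  intro Q
  induction Q using List.reverseRecOn with
  | nil =>
    intro w M P hnd hM _ hP h
    have hid : flipf [] = id := by funext x; simp [flipf]
    simpa [hid] using h
  | append_singleton Q x₀ ih =>
    intro w M P hnd hM hQ hP h
    obtain ⟨xb, k⟩ := x₀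
    have hxb : xb = false :=
      hQ (xb, k) (List.mem_append_right _ (List.mem_singleton.mpr rfl))
    subst hxb
    have hQ' : ∀ x ∈ Q, x.1 = false := fun x hx => hQ x (by simp [hx])
    have h' : List.foldl reduceStep [] w = (M ++ Q) ++ (false, k) :: P := by
      rw [h]; simp
    have hstnd := stack_rows_nodup w _ hnd h'
    have hkQ : k ∉ Q.map Prod.snd := by
      simp only [List.map_append, List.map_cons] at hstnd
      intro hc
      have h1 : ((M.map Prod.snd ++ Q.map Prod.snd) ++ k :: P.map Prod.snd).Nodup := by
        simpa [List.append_assoc] using hstnd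
      exact (List.nodup_append'.mp h1).2.2 (List.mem_append.mpr (Or.inr hc))
        (List.mem_cons_self)
    rcases decomp w [] (M ++ Q) P false k h' with ⟨E, hE⟩ | ⟨u, v, hw, hu, hv⟩
    · exact absurd hE (by simp)
    · rw [h'] at hv
      have hwrows : w.map Prod.snd = u.map Prod.snd ++ k :: v.map Prod.snd := by
        simp [hw]
      have hnd' : (u.map Prod.snd ++ k :: v.map Prod.snd).Nodup := by
        rw [← hwrows]; exact hnd
      have hku : k ∉ u.map Prod.snd := by
        have := (List.nodup_append'.mp hnd').2.2
        intro hc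
        exact this hc (List.mem_cons_self)
      have hkv : k ∉ v.map Prod.snd := by
        have := (List.nodup_append'.mp hnd').2.1
        exact (List.nodup_cons.mp this).1
      have hfkv : ((false, k) : Bool × ℕ) ∉ v := fun hc =>
        hkv (List.mem_map_of_mem (f := Prod.snd) hc)
      have hMQ : ∀ y ∈ M ++ Q, y.1 = false := by
        intro y hy
        rcases List.mem_append.mp hy with h1 | h1
        · exact hM y h1
        · exact hQ' y h1
      have hsim := sim2 v [] P (M ++ Q) k (by simp) hMQ hP hfkv (by simpa using hv)
      set w₂ : List (Bool × ℕ) := u ++ (true, k) :: v with hw₂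
      have h₂ : List.foldl reduceStep [] w₂ = M ++ Q ++ (true, k) :: P := by
        rw [hw₂, List.foldl_append, hu, List.foldl_cons, rs_push_alltrue P hP]
        simpa using hsim
      have hnd₂ : (w₂.map Prod.snd).Nodup := by
        have : w₂.map Prod.snd = u.map Prod.snd ++ k :: v.map Prod.snd := by
          simp [hw₂]
        rw [this]; exact hnd'
      have hIH := ih w₂ M ((true, k) :: P) hnd₂ hM hQ'
        (List.forall_mem_cons.mpr ⟨rfl, hP⟩) h₂
      have hmapeq : w.map (flipf ((Q ++ [((false, k) : Bool × ℕ)]).map Prod.snd))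
          = w₂.map (flipf (Q.map Prod.snd)) := by
        have hR : (Q ++ [((false, k) : Bool × ℕ)]).map Prod.snd
            = Q.map Prod.snd ++ [k] := by simp
        rw [hR, hw, hw₂]
        simp only [List.map_append, List.map_cons]
        congr 1
        · apply List.map_congr_left
          intro x hx
          exact flipf_of_ne' _ k x (fun hc => hku (hc ▸ List.mem_map_of_mem (f := Prod.snd) hx))
        · congr 1
          · show flipf _ (false, k) = flipf _ (true, k)
            simp [flipf, hkQ]
          · apply List.map_congr_left
            intro x hx
            exact flipf_of_ne' _ k x (fun hc => hkv (hc ▸ List.mem_map_of_mem (f := Prod.snd) hx))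
      rw [hmapeq, hIH]
      simp


lemma rowEntry_snd {p : ℕ} {i₀ : ZMod p} {lam : ℕ → ℕ} {s : ℕ} {x : Bool × ℕ}
    (h : rowEntry p i₀ lam s = some x) : x.2 = s := by
  unfold rowEntry at h
  split_ifs at h <;> first | (injection h with h'; rw [← h']) | simp at h

lemma rowEntry_true_iff {p : ℕ} {i₀ : ZMod p} {lam : ℕ → ℕ} {s : ℕ} :
    rowEntry p i₀ lam s = some (true, s) ↔
      (s = 0 ∨ lam s < lam (s - 1)) ∧ ((lam s : ZMod p) + 1 - (s + 1) = i₀) := by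
  unfold rowEntry
  split_ifs with h1 h2 <;> simp_all

lemma rowEntry_false_iff {p : ℕ} {i₀ : ZMod p} {lam : ℕ → ℕ} {s : ℕ} :
    rowEntry p i₀ lam s = some (false, s) ↔
      ¬((s = 0 ∨ lam s < lam (s - 1)) ∧ ((lam s : ZMod p) + 1 - (s + 1) = i₀)) ∧
      (lam (s + 1) < lam s) ∧ ((lam s : ZMod p) - (s + 1) = i₀) := by
  unfold rowEntry
  split_ifs with h1 h2 <;> simp_all

lemma modp_ge {p : ℕ} (a b : ℕ) (hab : (a : ZMod p) = (b : ZMod p)) (hlt : b < a)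
    (hp : 2 ≤ p) : b + p ≤ a := by
  have h3 : a ≡ b [MOD p] := (ZMod.natCast_eq_natCast_iff _ _ _).mp hab
  have h4 : p ∣ a - b := (Nat.modEq_iff_dvd' (le_of_lt hlt)).mp h3.symm
  have h5 : p ≤ a - b := Nat.le_of_dvd (by omega) h4
  omega

lemma row1 (p : ℕ) (i₀ : ZMod p) (lam : ℕ → ℕ) (R : List ℕ)
    (hp : 2 ≤ p) (hanti : Antitone lam)
    (hR : ∀ k ∈ R, rowEntry p i₀ lam k = some (true, k)) (s : ℕ) :
    rowEntry p i₀ (fun k => if k ∈ R then lam k + 1 else lam k) s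
      = Option.map (flipf R) (rowEntry p i₀ lam s) := by
  haveI : Fact (1 < p) := ⟨hp⟩
  have hp1 : (1 : ZMod p) ≠ 0 := one_ne_zero
  set μ : ℕ → ℕ := fun k => if k ∈ R then lam k + 1 else lam k with hμ
  by_cases hs : s ∈ R
  · -- flipped row
    have h0 := hR s hs
    obtain ⟨hA, hres⟩ := rowEntry_true_iff.mp h0
    have hμs : μ s = lam s + 1 := if_pos hs
    rw [h0]
    have hrhs : Option.map (flipf R) (some ((true, s) : Bool × ℕ)) = some (false, s) := by
      simp [flipf, hs]
    rw [hrhs, rowEntry_false_iff]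
    refine ⟨?_, ?_, ?_⟩
    · rintro ⟨-, hre⟩
      apply hp1
      rw [hμs] at hre
      push_cast at hre hres
      linear_combination hre - hres
    · by_cases h1 : (s + 1) ∈ R
      · have h2 := rowEntry_true_iff.mp (hR _ h1)
        have h3 : lam (s + 1) < lam s := by
          rcases h2.1 with h | h
          · omega
          · simpa using h
        have h4 : μ (s + 1) = lam (s + 1) + 1 := if_pos h1
        rw [hμs, h4]; omega
      · have h4 : μ (s + 1) = lam (s + 1) := if_neg h1
        have h3 : lam (s + 1) ≤ lam s := hanti (by omega)
        rw [hμs, h4]; omega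
    · rw [hμs]
      push_cast at hres ⊢
      linear_combination hres
  · -- unmodified row
    have hμs : μ s = lam s := if_neg hs
    have hAiff : ((s = 0 ∨ μ s < μ (s - 1)) ∧ ((μ s : ZMod p) + 1 - (s + 1) = i₀)) ↔
        ((s = 0 ∨ lam s < lam (s - 1)) ∧ ((lam s : ZMod p) + 1 - (s + 1) = i₀)) := by
      rw [hμs]
      by_cases hs0 : s = 0
      · simp [hs0]
      · constructor
        · rintro ⟨hc, hr'⟩
          refine ⟨?_, hr'⟩
          rcases hc with h | h
          · exact Or.inl h
          right
          by_cases h1 : (s - 1) ∈ R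
          · have h2 := rowEntry_true_iff.mp (hR _ h1)
            have hresm := h2.2
            have hne : lam s ≠ lam (s - 1) := by
              intro he
              apply hp1
              have hc1 : ((s - 1 : ℕ) : ZMod p) = (s : ZMod p) - 1 := by
                have h9 : ((s - 1 : ℕ) : ZMod p) = (s : ZMod p) - ((1:ℕ) : ZMod p) :=
                  Nat.cast_sub (show 1 ≤ s by omega)
                simpa using h9
              rw [hc1, ← he] at hresm
              linear_combination hresm - hr'
            have hle : lam s ≤ lam (s - 1) := hanti (by omega)
            omega
          · have h4 : μ (s - 1) = lam (s - 1) := if_neg h1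
            rw [h4] at h; exact h
        · rintro ⟨hc, hr'⟩
          refine ⟨?_, hr'⟩
          rcases hc with h | h
          · exact Or.inl h
          right
          by_cases h1 : (s - 1) ∈ R
          · have h4 : μ (s - 1) = lam (s - 1) + 1 := if_pos h1
            rw [h4]; omega
          · have h4 : μ (s - 1) = lam (s - 1) := if_neg h1
            rw [h4]; exact h
    have hBiff : ((μ (s + 1) < μ s) ∧ ((μ s : ZMod p) - (s + 1) = i₀)) ↔
        ((lam (s + 1) < lam s) ∧ ((lam s : ZMod p) - (s + 1) = i₀)) := by
      rw [hμs]
      constructor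
      · rintro ⟨hc, hr'⟩
        refine ⟨?_, hr'⟩
        by_cases h1 : (s + 1) ∈ R
        · have h4 : μ (s + 1) = lam (s + 1) + 1 := if_pos h1
          rw [h4] at hc; omega
        · have h4 : μ (s + 1) = lam (s + 1) := if_neg h1
          rw [h4] at hc; exact hc
      · rintro ⟨hc, hr'⟩
        refine ⟨?_, hr'⟩
        by_cases h1 : (s + 1) ∈ R
        · have h2 := rowEntry_true_iff.mp (hR _ h1)
          have hresp := h2.2
          have hmod : ((lam s : ZMod p)) = (lam (s + 1) : ZMod p) := by
            push_cast at hresp hr'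
            linear_combination hr' - hresp
          have hge := modp_ge (lam s) (lam (s + 1)) hmod hc hp
          have h4 : μ (s + 1) = lam (s + 1) + 1 := if_pos h1
          rw [h4]; omega
        · have h4 : μ (s + 1) = lam (s + 1) := if_neg h1
          rw [h4]; exact hc
    have hL : rowEntry p i₀ μ s = rowEntry p i₀ lam s := by
      unfold rowEntry
      rw [if_congr hAiff rfl rfl, if_congr hBiff rfl rfl]
    rw [hL]
    cases hre : rowEntry p i₀ lam s with
    | none => rfl
    | some x =>
      have hx2 : x.2 = s := rowEntry_snd hre
      have : flipf R x = x := by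
        unfold flipf
        rw [if_neg]
        rw [hx2]; exact hs
      simp [this]

lemma row2 (p : ℕ) (i₀ : ZMod p) (lam : ℕ → ℕ) (R : List ℕ)
    (hp : 2 ≤ p) (hanti : Antitone lam)
    (hR : ∀ k ∈ R, rowEntry p i₀ lam k = some (false, k)) (s : ℕ) :
    rowEntry p i₀ (fun k => if k ∈ R then lam k - 1 else lam k) s
      = Option.map (flipf R) (rowEntry p i₀ lam s) := by
  haveI : Fact (1 < p) := ⟨hp⟩
  have hp1 : (1 : ZMod p) ≠ 0 := one_ne_zero
  set μ : ℕ → ℕ := fun k => if k ∈ R then lam k - 1 else lam k with hμ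
  by_cases hs : s ∈ R
  · have h0 := hR s hs
    obtain ⟨hnA, hB, hres⟩ := rowEntry_false_iff.mp h0
    have hpos : 1 ≤ lam s := by omega
    have hμs : μ s = lam s - 1 := if_pos hs
    rw [h0]
    have hrhs : Option.map (flipf R) (some ((false, s) : Bool × ℕ)) = some (true, s) := by
      simp [flipf, hs]
    rw [hrhs, rowEntry_true_iff]
    constructor
    · by_cases hs0 : s = 0
      · exact Or.inl hs0
      right
      by_cases h1 : (s - 1) ∈ R
      · have h2 := rowEntry_false_iff.mp (hR _ h1)
        have hBm := h2.2.1
        have hst : s - 1 + 1 = s := by omega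
        rw [hst] at hBm
        have h4 : μ (s - 1) = lam (s - 1) - 1 := if_pos h1
        rw [hμs, h4]; omega
      · have h4 : μ (s - 1) = lam (s - 1) := if_neg h1
        have h5 : lam s ≤ lam (s - 1) := hanti (by omega)
        rw [hμs, h4]; omega
    · rw [hμs]
      have hc1 : ((lam s - 1 : ℕ) : ZMod p) = (lam s : ZMod p) - ((1:ℕ) : ZMod p) :=
        Nat.cast_sub hpos
      rw [hc1]
      push_cast at hres ⊢
      linear_combination hres
  · have hμs : μ s = lam s := if_neg hs
    have hAiff : ((s = 0 ∨ μ s < μ (s - 1)) ∧ ((μ s : ZMod p) + 1 - (s + 1) = i₀)) ↔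
        ((s = 0 ∨ lam s < lam (s - 1)) ∧ ((lam s : ZMod p) + 1 - (s + 1) = i₀)) := by
      rw [hμs]
      by_cases hs0 : s = 0
      · simp [hs0]
      · constructor
        · rintro ⟨hc, hr'⟩
          refine ⟨?_, hr'⟩
          rcases hc with h | h
          · exact Or.inl h
          right
          by_cases h1 : (s - 1) ∈ R
          · have h4 : μ (s - 1) = lam (s - 1) - 1 := if_pos h1
            rw [h4] at h; omega
          · have h4 : μ (s - 1) = lam (s - 1) := if_neg h1
            rw [h4] at h; exact h
        · rintro ⟨hc, hr'⟩
          refine ⟨?_, hr'⟩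
          rcases hc with h | h
          · exact Or.inl h
          right
          by_cases h1 : (s - 1) ∈ R
          · have h2 := rowEntry_false_iff.mp (hR _ h1)
            have hresm := h2.2.2
            have hc1 : ((s - 1 : ℕ) : ZMod p) = (s : ZMod p) - ((1:ℕ) : ZMod p) :=
              Nat.cast_sub (show 1 ≤ s by omega)
            rw [hc1] at hresm
            have hmod : ((lam (s - 1) : ZMod p)) = (lam s : ZMod p) := by
              push_cast at hresm hr'
              linear_combination hresm - hr'
            have hge := modp_ge (lam (s - 1)) (lam s) hmod h hp
            have h4 : μ (s - 1) = lam (s - 1) - 1 := if_pos h1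
            rw [h4]; omega
          · have h4 : μ (s - 1) = lam (s - 1) := if_neg h1
            rw [h4]; exact h
    have hBiff : ((μ (s + 1) < μ s) ∧ ((μ s : ZMod p) - (s + 1) = i₀)) ↔
        ((lam (s + 1) < lam s) ∧ ((lam s : ZMod p) - (s + 1) = i₀)) := by
      rw [hμs]
      constructor
      · rintro ⟨hc, hr'⟩
        refine ⟨?_, hr'⟩
        by_cases h1 : (s + 1) ∈ R
        · have h2 := rowEntry_false_iff.mp (hR _ h1)
          have hresp := h2.2.2
          have hle : lam (s + 1) ≤ lam s := hanti (by omega)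
          rcases lt_or_eq_of_le hle with h5 | h5
          · exact h5
          · exfalso
            apply hp1
            rw [h5] at hresp
            push_cast at hresp hr'
            linear_combination hr' - hresp
        · have h4 : μ (s + 1) = lam (s + 1) := if_neg h1
          rw [h4] at hc; exact hc
      · rintro ⟨hc, hr'⟩
        refine ⟨?_, hr'⟩
        by_cases h1 : (s + 1) ∈ R
        · have h4 : μ (s + 1) = lam (s + 1) - 1 := if_pos h1
          rw [h4]; omega
        · have h4 : μ (s + 1) = lam (s + 1) := if_neg h1
          rw [h4]; exact hc
    have hL : rowEntry p i₀ μ s = rowEntry p i₀ lam s := by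
      unfold rowEntry
      rw [if_congr hAiff rfl rfl, if_congr hBiff rfl rfl]
    rw [hL]
    cases hre : rowEntry p i₀ lam s with
    | none => rfl
    | some x =>
      have hx2 : x.2 = s := rowEntry_snd hre
      have hfx : flipf R x = x := by
        unfold flipf
        rw [if_neg]
        rw [hx2]; exact hs
      simp [hfx]

lemma rowEntry_none_top (p : ℕ) (i₀ : ZMod p) (lam : ℕ → ℕ) (s : ℕ)
    (h0 : s ≠ 0) (h1 : lam s = 0) (h2 : lam (s - 1) = 0) :
    rowEntry p i₀ lam s = none := by
  unfold rowEntry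
  rw [if_neg, if_neg]
  · rintro ⟨h, -⟩; omega
  · rintro ⟨h, -⟩
    rcases h with h | h <;> omega


-- signature-level helpers
lemma filterMap_rows_sublist (f : ℕ → Option (Bool × ℕ))
    (hf : ∀ s x, f s = some x → x.2 = s) :
    ∀ l : List ℕ, List.Sublist ((l.filterMap f).map Prod.snd) l := by
  intro l
  induction l with
  | nil => simp
  | cons a l ih =>
    rw [List.filterMap_cons]
    cases h : f a with
    | none => exact ih.cons a
    | some x =>
      simp only [List.map_cons]
      rw [hf a x h]
      exact ih.cons₂ a

lemma sig_rows_nodup (p : ℕ) (i₀ : ZMod p) (lam : ℕ → ℕ) (N : ℕ) :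
    ((signature p i₀ lam N).map Prod.snd).Nodup := by
  have h1 := filterMap_rows_sublist (rowEntry p i₀ lam)
    (fun s x h => rowEntry_snd h) ((List.range (N + 1)).reverse)
  exact (List.nodup_reverse.mpr (List.nodup_range)).sublist h1

lemma mem_sig {p : ℕ} {i₀ : ZMod p} {lam : ℕ → ℕ} {N : ℕ} {b : Bool} {k : ℕ}
    (h : (b, k) ∈ signature p i₀ lam N) :
    rowEntry p i₀ lam k = some (b, k) ∧ k ≤ N := by
  unfold signature at h
  obtain ⟨a, ha, hfa⟩ := List.mem_filterMap.mp h
  have h2 : k = a := rowEntry_snd hfa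
  subst h2
  refine ⟨hfa, ?_⟩
  have := List.mem_range.mp (List.mem_reverse.mp ha)
  omega

lemma sig_flip (p : ℕ) (i₀ : ZMod p) (lam μ : ℕ → ℕ) (N : ℕ) (R : List ℕ)
    (hrow : ∀ s, rowEntry p i₀ μ s = Option.map (flipf R) (rowEntry p i₀ lam s))
    (htop : rowEntry p i₀ lam (N + 1) = none) :
    signature p i₀ μ (N + 1) = (signature p i₀ lam N).map (flipf R) := by
  unfold signature
  have h1 : List.range (N + 1 + 1) = List.range (N + 1) ++ [N + 1] := List.range_succ
  rw [h1, List.reverse_append]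
  have htop' : rowEntry p i₀ μ (N + 1) = none := by
    rw [hrow (N + 1), htop]; rfl
  simp only [List.reverse_singleton, List.singleton_append,
    List.filterMap_cons, htop']
  rw [List.map_filterMap]
  exact List.filterMap_congr (fun a _ => hrow a)

end Helpers

/-- Let `p ≥ 2`, `λ` a `p`-regular partition and `i₀` a
residue mod `p`.  If `r ≤ φ_{i₀}(λ)` then `ẽ_{i₀}^r (f̃_{i₀}^r λ) = λ`, and
if `r ≤ ε_{i₀}(λ)` then `f̃_{i₀}^r (ẽ_{i₀}^r λ) = λ`. -/
theorem stmt11 (p : ℕ) (hp : 2 ≤ p) (i₀ : ZMod p) (lam : ℕ → ℕ)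
    (hanti : Antitone lam) (N : ℕ) (hN : ∀ m, N ≤ m → lam m = 0)
    (hreg : PRegular p lam) (r : ℕ) :
    (r ≤ phiConormal p i₀ lam N →
      etilde p i₀ (ftilde p i₀ lam N r) (N + 1) r = lam) ∧
    (r ≤ epsNormal p i₀ lam N →
      ftilde p i₀ (etilde p i₀ lam N r) (N + 1) r = lam) := by
  have hnd : ((signature p i₀ lam N).map Prod.snd).Nodup := sig_rows_nodup p i₀ lam N
  obtain ⟨M, P, hMP, hM, hP⟩ :=
    stack_form (signature p i₀ lam N) [] [] (by simp) (by simp)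
  rw [List.nil_append] at hMP
  have hsigmem : ∀ x : Bool × ℕ, x ∈ M ++ P → x ∈ signature p i₀ lam N := by
    intro x hx
    have h1 : x ∈ (List.foldl reduceStep [] (signature p i₀ lam N)).reverse := by
      rw [hMP]; exact List.mem_reverse.mpr hx
    have h2 := (stack_rev_sublist (signature p i₀ lam N) []).mem h1
    simpa using h2
  have hred : reducedSig (signature p i₀ lam N) = P.reverse ++ M.reverse := by
    unfold reducedSig
    rw [hMP, List.reverse_append]
  have hco : conormalRows p i₀ lam N = (P.reverse).map Prod.snd := by
    unfold conormalRows
    rw [hred, List.filter_append]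
    have e1 : (P.reverse).filter (fun x => x.1 = true) = P.reverse :=
      List.filter_eq_self.mpr
        (by intro a ha; have := hP a (List.mem_reverse.mp ha); simp [this])
    have e2 : (M.reverse).filter (fun x => x.1 = true) = [] :=
      List.filter_eq_nil_iff.mpr
        (by intro a ha; have := hM a (List.mem_reverse.mp ha); simp [this])
    rw [e1, e2, List.append_nil]
  have hno : normalRows p i₀ lam N = (M.reverse).map Prod.snd := by
    unfold normalRows
    rw [hred, List.filter_append]
    have e1 : (P.reverse).filter (fun x => x.1 = false) = [] :=
      List.filter_eq_nil_iff.mpr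
        (by intro a ha; have := hP a (List.mem_reverse.mp ha); simp [this])
    have e2 : (M.reverse).filter (fun x => x.1 = false) = M.reverse :=
      List.filter_eq_self.mpr
        (by intro a ha; have := hM a (List.mem_reverse.mp ha); simp [this])
    rw [e1, e2, List.nil_append]
  have htop : rowEntry p i₀ lam (N + 1) = none := by
    apply rowEntry_none_top p i₀ lam (N + 1) (by omega) (hN _ (by omega))
    have : N + 1 - 1 = N := by omega
    rw [this]
    exact hN _ le_rfl
  constructor
  · -- first statement
    intro hr
    have hphi : phiConormal p i₀ lam N = P.length := by
      unfold phiConormal; rw [hco]; simp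
    rw [hphi] at hr
    set R : List ℕ := (P.take r).map Prod.snd with hRdef
    have hRR : ((conormalRows p i₀ lam N).reverse).take r = R := by
      rw [hco, List.map_reverse, List.reverse_reverse, hRdef, List.map_take]
    have hmu : ∀ k, ftilde p i₀ lam N r k = if k ∈ R then lam k + 1 else lam k := by
      intro k
      unfold ftilde
      rw [hRR]
    have hmufun : ftilde p i₀ lam N r = fun k => if k ∈ R then lam k + 1 else lam k :=
      funext hmu
    have hRtrue : ∀ k ∈ R, rowEntry p i₀ lam k = some (true, k) := by
      intro k hk
      obtain ⟨x, hx1, hx2⟩ := List.mem_map.mp hk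
      have hxP : x ∈ P := List.take_subset r P hx1
      have hb : x.1 = true := hP x hxP
      have hxeq : x = (true, k) := by
        rcases x with ⟨xb, xk⟩
        simp only at hb hx2
        rw [hb, hx2]
      rw [hxeq] at hxP
      exact (mem_sig (hsigmem _ (List.mem_append_right M hxP))).1
    have hrow := row1 p i₀ lam R hp hanti hRtrue
    have hsig : signature p i₀ (ftilde p i₀ lam N r) (N + 1)
        = (signature p i₀ lam N).map (flipf R) := by
      rw [hmufun]
      exact sig_flip p i₀ lam _ N R hrow htop
    have hiter := iter1 r (signature p i₀ lam N) M P hnd hM hP hMP hr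
    set Tf : List (Bool × ℕ) := (P.take r).map (fun x => (false, x.2)) with hTf
    have hstack2 : List.foldl reduceStep [] (signature p i₀ (ftilde p i₀ lam N r) (N + 1))
        = (M ++ Tf) ++ P.drop r := by
      rw [hsig, hiter, List.append_assoc]
    have hMTf : ∀ x ∈ M ++ Tf, x.1 = false := by
      intro x hx
      rcases List.mem_append.mp hx with h1 | h1
      · exact hM x h1
      · obtain ⟨y, -, hy2⟩ := List.mem_map.mp h1
        rw [← hy2]
    have hPd : ∀ x ∈ P.drop r, x.1 = true := fun x hx => hP x (List.drop_subset r P hx)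
    have hno2 : normalRows p i₀ (ftilde p i₀ lam N r) (N + 1)
        = ((M ++ Tf).reverse).map Prod.snd := by
      unfold normalRows reducedSig
      rw [hstack2, List.reverse_append, List.filter_append]
      have e1 : ((P.drop r).reverse).filter (fun x => x.1 = false) = [] :=
        List.filter_eq_nil_iff.mpr
          (by intro a ha; have := hPd a (List.mem_reverse.mp ha); simp [this])
      have e2 : ((M ++ Tf).reverse).filter (fun x => x.1 = false) = (M ++ Tf).reverse :=
        List.filter_eq_self.mpr
          (by intro a ha; have := hMTf a (List.mem_reverse.mp ha); simp [this])
      rw [e1, e2, List.nil_append]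
    have hTflen : (Tf.reverse.map Prod.snd).length = r := by
      simp [hTf]
      omega
    have htake : (normalRows p i₀ (ftilde p i₀ lam N r) (N + 1)).take r
        = Tf.reverse.map Prod.snd := by
      rw [hno2, List.reverse_append, List.map_append]
      exact List.take_left' hTflen
    have hmem : ∀ k, k ∈ (normalRows p i₀ (ftilde p i₀ lam N r) (N + 1)).take r ↔ k ∈ R := by
      intro k
      rw [htake, hRdef, hTf]
      simp only [List.map_reverse, List.mem_reverse, List.map_map, ← List.map_take]
      have hmm : List.map (Prod.snd ∘ fun x : Bool × ℕ => (false, x.2)) (P.take r)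
          = List.map Prod.snd (P.take r) := List.map_congr_left (fun x _ => rfl)
      rw [hmm]
    funext k
    show (if k ∈ (normalRows p i₀ (ftilde p i₀ lam N r) (N + 1)).take r
        then ftilde p i₀ lam N r k - 1 else ftilde p i₀ lam N r k) = lam k
    by_cases hk : k ∈ R
    · rw [if_pos ((hmem k).mpr hk), hmu k, if_pos hk]
      omega
    · rw [if_neg (fun hc => hk ((hmem k).mp hc)), hmu k, if_neg hk]
  · -- second statement
    intro hr
    have heps : epsNormal p i₀ lam N = M.length := by
      unfold epsNormal; rw [hno]; simp
    rw [heps] at hr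
    set M₁ : List (Bool × ℕ) := M.take (M.length - r) with hM₁def
    set M₂ : List (Bool × ℕ) := M.drop (M.length - r) with hM₂def
    have hsplit : M = M₁ ++ M₂ := (List.take_append_drop _ M).symm
    have hlen₂ : M₂.length = r := by
      rw [hM₂def, List.length_drop]
      omega
    have hM₁f : ∀ x ∈ M₁, x.1 = false := fun x hx => hM x (List.take_subset _ M hx)
    have hM₂f : ∀ x ∈ M₂, x.1 = false := fun x hx => hM x (List.drop_subset _ M hx)
    set R : List ℕ := (normalRows p i₀ lam N).take r with hRdef
    have hRR : R = (M₂.reverse).map Prod.snd := by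
      rw [hRdef, hno]
      conv_lhs => rw [hsplit]
      rw [List.reverse_append, List.map_append]
      refine List.take_left' ?_
      simp [hlen₂]
    have hmu : ∀ k, etilde p i₀ lam N r k = if k ∈ R then lam k - 1 else lam k := by
      intro k
      unfold etilde
      rfl
    have hmufun : etilde p i₀ lam N r = fun k => if k ∈ R then lam k - 1 else lam k :=
      funext hmu
    have hRfalse : ∀ k ∈ R, rowEntry p i₀ lam k = some (false, k) := by
      intro k hk
      rw [hRR] at hk
      obtain ⟨x, hx1, hx2⟩ := List.mem_map.mp hk
      have hxM : x ∈ M := by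
        have := List.mem_reverse.mp hx1
        rw [hsplit]
        exact List.mem_append_right M₁ this
      have hb : x.1 = false := hM x hxM
      have hxeq : x = (false, k) := by
        rcases x with ⟨xb, xk⟩
        simp only at hb hx2
        rw [hb, hx2]
      rw [hxeq] at hxM
      exact (mem_sig (hsigmem _ (List.mem_append_left P hxM))).1
    have hrow := row2 p i₀ lam R hp hanti hRfalse
    have hsig : signature p i₀ (etilde p i₀ lam N r) (N + 1)
        = (signature p i₀ lam N).map (flipf R) := by
      rw [hmufun]
      exact sig_flip p i₀ lam _ N R hrow htop
    have hflipeq : flipf R = flipf (M₂.map Prod.snd) := by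
      funext x
      unfold flipf
      refine if_congr ?_ rfl rfl
      rw [hRR]
      simp
    have hMP' : List.foldl reduceStep [] (signature p i₀ lam N) = M₁ ++ M₂ ++ P := by
      rw [hMP, hsplit]
    have hiter := iter2 M₂ (signature p i₀ lam N) M₁ P hnd hM₁f hM₂f hP hMP'
    set Tt : List (Bool × ℕ) := M₂.map (fun x => (true, x.2)) with hTt
    have hstack2 : List.foldl reduceStep [] (signature p i₀ (etilde p i₀ lam N r) (N + 1))
        = M₁ ++ (Tt ++ P) := by
      rw [hsig, hflipeq, hiter, List.append_assoc]
    have hTtP : ∀ x ∈ Tt ++ P, x.1 = true := by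
      intro x hx
      rcases List.mem_append.mp hx with h1 | h1
      · obtain ⟨y, -, hy2⟩ := List.mem_map.mp h1
        rw [← hy2]
      · exact hP x h1
    have hco2 : conormalRows p i₀ (etilde p i₀ lam N r) (N + 1)
        = ((Tt ++ P).reverse).map Prod.snd := by
      unfold conormalRows reducedSig
      rw [hstack2, List.reverse_append, List.filter_append]
      have e1 : ((Tt ++ P).reverse).filter (fun x => x.1 = true) = (Tt ++ P).reverse :=
        List.filter_eq_self.mpr
          (by intro a ha; have := hTtP a (List.mem_reverse.mp ha); simp [this])
      have e2 : (M₁.reverse).filter (fun x => x.1 = true) = [] :=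
        List.filter_eq_nil_iff.mpr
          (by intro a ha; have := hM₁f a (List.mem_reverse.mp ha); simp [this])
      rw [e1, e2, List.append_nil]
    have hTtlen : (Tt.map Prod.snd).length = r := by
      simp [hTt, hlen₂]
    have htake : ((conormalRows p i₀ (etilde p i₀ lam N r) (N + 1)).reverse).take r
        = Tt.map Prod.snd := by
      rw [hco2, List.map_reverse, List.reverse_reverse, List.map_append]
      exact List.take_left' hTtlen
    have hmem : ∀ k,
        k ∈ ((conormalRows p i₀ (etilde p i₀ lam N r) (N + 1)).reverse).take r ↔ k ∈ R := by
      intro k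
      rw [htake, hRR, hTt]
      simp
    funext k
    show (if k ∈ ((conormalRows p i₀ (etilde p i₀ lam N r) (N + 1)).reverse).take r
        then etilde p i₀ lam N r k + 1 else etilde p i₀ lam N r k) = lam k
    by_cases hk : k ∈ R
    · rw [if_pos ((hmem k).mpr hk), hmu k, if_pos hk]
      have hlam : 1 ≤ lam k := by
        have h2 := rowEntry_false_iff.mp (hRfalse k hk)
        omega
      omega
    · rw [if_neg (fun hc => hk ((hmem k).mp hc)), hmu k, if_neg hk]
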